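/- arXiv:1409.5410 — 3 statements merged into one kernel-verified Lean document; each statement's English description precedes it below -/
import Mathlib

section
/- Let X be a type, Z ⊆ X a subset, and i, j, n natural numbers with i + j = n. Let W = {w : Fin n → X | the number of indices k with w k ∈ Z equals j}; W is invariant under the action of Σn on (Fin n → X) given by (σ • w) = w ∘ σ⁻¹. Let η : ((Fin i → X \ Z) × (Fin j → Z)) → W be the concatenation map sending (u, v) to the tuple equal to u on the first i coordinates and to v on the last j coordinates (via the standard equivalence Fin i ⊕ Fin j ≅ Fin n). Then for every Σn-set S and every (Σi × Σj)-equivariant map f : ((Fin i → X \ Z) × (Fin j → Z)) → S (where Σi × Σj acts blockwise on the source and acts on S through the block embedding into Σn), there exists a unique Σn-equivariant map f♮ : W → S with f♮ ∘ η = f. Consequently W is Σn-equivariantly isomorphic to the induced Σn-set Ind_{Σi×Σj}^{Σn}(((Fin i → X \ Z)) × (Fin j → Z)). -/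
/-!
Every `w ∈ W` can be sorted: some `σ` moves its `j` coordinates lying in `Z` to the last `j`
places, so `w = σ • η x`. If `η x = ρ • η y`, then `ρ` carries the positions of the `Z`-entries
of `η y` to those of `η x`, i.e. the last `j` places to themselves, so `ρ` is the image of some
`p ∈ Σi × Σj`, and `x = p • y` because `η` is injective. These two facts say that
`[(g, x)] ↦ g • η x` is a bijection `Ind_{Σi×Σj}^{Σn} P → W`, through which `W` inherits the
universal property of the induced set.
-/

open Equiv

namespace Stmt0

/-- The standard equivalence `Fin i ⊕ Fin j ≃ Fin n` for `i + j = n`. -/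
def finAdd {i j n : ℕ} (h : i + j = n) : Fin i ⊕ Fin j ≃ Fin n :=
  finSumFinEquiv.trans (finCongr h)

/-- The block embedding `Σi × Σj → Σn`: the first factor permutes the first `i`
elements, the second the last `j`. -/
def blockEmb {i j n : ℕ} (h : i + j = n) (p : Perm (Fin i) × Perm (Fin j)) :
    Perm (Fin n) :=
  (finAdd h).permCongr (Equiv.sumCongr p.1 p.2)

/-- The relation `(g, x) ~ (g·φ(h), h⁻¹ • x)` defining the induced `G`-set. -/
def IndRel {G H P : Type*} [Group G] [Group H] (φ : H → G) (act : H → P → P) :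
    G × P → G × P → Prop :=
  fun a b => ∃ h : H, b = (a.1 * φ h, act h⁻¹ a.2)

/-- The induced `G`-set `Ind_H^G P`, a quotient of `G × P`. -/
def Ind {G H P : Type*} [Group G] [Group H] (φ : H → G) (act : H → P → P) : Type _ :=
  Quot (IndRel φ act)

/-- Class of a pair `(g, x)` in the induced `G`-set. -/
def Ind.mk {G H P : Type*} [Group G] [Group H] (φ : H → G) (act : H → P → P)
    (a : G × P) : Ind φ act :=
  Quot.mk _ a

/-- The `G`-action on `Ind_H^G P`, by left multiplication on the first coordinate. -/
def Ind.smul {G H P : Type*} [Group G] [Group H] {φ : H → G} {act : H → P → P}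
    (g : G) : Ind φ act → Ind φ act :=
  Quot.map (fun a => (g * a.1, a.2))
    (by
      rintro ⟨g1, x1⟩ ⟨g2, x2⟩ ⟨h, heq⟩
      refine ⟨h, ?_⟩
      simp only [Prod.ext_iff] at heq ⊢
      exact ⟨by rw [heq.1, mul_assoc], heq.2⟩)

variable {X : Type} (Z : Set X)

/-- The action of `Σn` on `Fin n → X` by `(σ • w) = w ∘ σ⁻¹`. -/
def permSmul {X : Type} {n : ℕ} (σ : Perm (Fin n)) (w : Fin n → X) : Fin n → X :=
  fun k => w (σ⁻¹ k)

/-- `W`: the tuples for which the number of coordinates lying in `Z` is exactly `j`. -/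
def Wset (j n : ℕ) : Set (Fin n → X) :=
  {w | Nat.card {k : Fin n // w k ∈ Z} = j}

/-- `W` is invariant under the `Σn`-action, so the action restricts to `W`. -/
def WAct {j n : ℕ} (σ : Perm (Fin n)) (w : Wset Z j n) : Wset Z j n :=
  ⟨permSmul σ w.1, by
    have hw := w.2
    simp only [Wset, Set.mem_setOf_eq] at hw ⊢
    exact (Nat.card_congr (Equiv.subtypeEquiv (σ⁻¹ : Perm (Fin n)) fun a => Iff.rfl)).trans hw⟩

/-- The blockwise action of `Σi × Σj` on `(Fin i → X \ Z) × (Fin j → Z)`. -/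
def sourceAct {i j : ℕ} (p : Perm (Fin i) × Perm (Fin j))
    (x : (Fin i → ↥(Zᶜ)) × (Fin j → ↥Z)) : (Fin i → ↥(Zᶜ)) × (Fin j → ↥Z) :=
  (fun a => x.1 (p.1⁻¹ a), fun b => x.2 (p.2⁻¹ b))

/-- The concatenation of a tuple in `X \ Z` and a tuple in `Z`, via `Fin i ⊕ Fin j ≃ Fin n`. -/
def concat {i j n : ℕ} (h : i + j = n) (x : (Fin i → ↥(Zᶜ)) × (Fin j → ↥Z)) :
    Fin n → X :=
  fun k => Sum.elim (fun a => (x.1 a : X)) (fun b => (x.2 b : X)) ((finAdd h).symm k)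

lemma concat_mem {i j n : ℕ} (h : i + j = n) (x : (Fin i → ↥(Zᶜ)) × (Fin j → ↥Z)) :
    concat Z h x ∈ Wset Z j n := by
  simp only [Wset, Set.mem_setOf_eq]
  have e1 : {k : Fin n // concat Z h x k ∈ Z} ≃
      {s : Fin i ⊕ Fin j // Sum.elim (fun a => (x.1 a : X)) (fun b => (x.2 b : X)) s ∈ Z} :=
    Equiv.subtypeEquiv (finAdd h).symm fun k => Iff.rfl
  have e2 : {s : Fin i ⊕ Fin j //
      Sum.elim (fun a => (x.1 a : X)) (fun b => (x.2 b : X)) s ∈ Z} ≃ Fin j :=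
    { toFun := fun s => match s with
        | ⟨.inl a, ha⟩ => absurd ha (x.1 a).2
        | ⟨.inr b, _⟩ => b
      invFun := fun b => ⟨.inr b, (x.2 b).2⟩
      left_inv := by rintro ⟨(a | b), hs⟩
                     · exact absurd hs (x.1 a).2
                     · rfl
      right_inv := fun b => rfl }
  rw [Nat.card_congr (e1.trans e2), Nat.card_eq_fintype_card, Fintype.card_fin]

/-- The concatenation map `η` into `W`. -/
def η {i j n : ℕ} (h : i + j = n) (x : (Fin i → ↥(Zᶜ)) × (Fin j → ↥Z)) : Wset Z j n :=
  ⟨concat Z h x, concat_mem Z h x⟩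

section Induced

variable {G H P : Type*} [Group G] [Group H] [MulAction H P] (φ : H →* G)

def Ind.lift {S : Type*} [MulAction G S] (f : P → S) (hf : ∀ (h : H) x, f (h • x) = φ h • f x) :
    Ind φ (fun (h : H) (x : P) => h • x) → S :=
  Quot.lift (fun a => a.1 • f a.2) <| by
    rintro ⟨g, x⟩ _ ⟨h, rfl⟩
    simp only [hf, smul_smul, map_inv, mul_inv_cancel_right]

variable {φ} {S : Type*} [MulAction G S] {f : P → S} {hf : ∀ (h : H) x, f (h • x) = φ h • f x}

@[simp]
lemma Ind.lift_mk (g : G) (x : P) : Ind.lift φ f hf (Ind.mk _ _ (g, x)) = g • f x := rfl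

lemma Ind.lift_smul (g : G) (z : Ind φ (fun (h : H) (x : P) => h • x)) :
    Ind.lift φ f hf (Ind.smul g z) = g • Ind.lift φ f hf z := by
  induction z using Quot.ind
  exact mul_smul _ _ _

variable {W : Type*} [MulAction G W] {η : P → W}

lemma Ind.lift_bijective (hη : ∀ (h : H) x, η (h • x) = φ h • η x)
    (hsurj : ∀ w, ∃ (g : G) (x : P), g • η x = w)
    (hfib : ∀ (g : G) x y, η x = g • η y → ∃ h, φ h = g ∧ h • y = x) :
    Function.Bijective (Ind.lift φ η hη) := by
  refine ⟨?_, fun w => ?_⟩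
  · rintro ⟨g, x⟩ ⟨g', y⟩ (hxy : g • η x = g' • η y)
    obtain ⟨h, hg, rfl⟩ := hfib (g⁻¹ * g') x y (by rw [mul_smul, ← hxy, inv_smul_smul])
    exact Quot.sound ⟨h, by simp [hg]⟩
  · obtain ⟨g, x, rfl⟩ := hsurj w
    exact ⟨Ind.mk _ _ (g, x), rfl⟩

theorem existsUnique_equivariant_extension (hη : ∀ (h : H) x, η (h • x) = φ h • η x)
    (hsurj : ∀ w, ∃ (g : G) (x : P), g • η x = w)
    (hfib : ∀ (g : G) x y, η x = g • η y → ∃ h, φ h = g ∧ h • y = x)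
    (f : P → S) (hf : ∀ (h : H) x, f (h • x) = φ h • f x) :
    ∃! F : W → S, (∀ (g : G) w, F (g • w) = g • F w) ∧ ∀ x, F (η x) = f x := by
  set e := Equiv.ofBijective _ (Ind.lift_bijective hη hsurj hfib)
  have he : ∀ (g : G) z, e (Ind.smul g z) = g • e z := Ind.lift_smul (hf := hη)
  have he_mk : ∀ x, e (Ind.mk _ _ (1, x)) = η x := fun x => one_smul G (η x)
  refine ⟨Ind.lift φ f hf ∘ e.symm, ⟨fun g w => ?_, fun x => ?_⟩, fun F ⟨hFg, hFη⟩ => ?_⟩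
  · obtain ⟨z, rfl⟩ := e.surjective w
    simp only [Function.comp_apply, ← he, Equiv.symm_apply_apply, Ind.lift_smul]
  · simp only [Function.comp_apply, ← he_mk, Equiv.symm_apply_apply, Ind.lift_mk, one_smul]
  · funext w
    obtain ⟨g, x, rfl⟩ := hsurj w
    rw [hFg, hFη, ← he_mk, ← he, Function.comp_apply, Equiv.symm_apply_apply, Ind.lift_smul,
      Ind.lift_mk, one_smul]

end Induced

section Blocks

variable {i j n : ℕ} (h : i + j = n)

def blockEmbHom : Perm (Fin i) × Perm (Fin j) →* Perm (Fin n) :=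
  (finAdd h).permCongrHom.toMonoidHom.comp (Perm.sumCongrHom _ _)

lemma coe_blockEmbHom : ⇑(blockEmbHom h) = blockEmb h := rfl

lemma exists_blockEmb_eq {ρ : Perm (Fin n)}
    (hρ : ∀ k, ((finAdd h).symm (ρ k)).isRight = ((finAdd h).symm k).isRight) :
    ∃ p, blockEmb h p = ρ := by
  set τ := (finAdd h).symm.permCongr ρ
  have hτ : Set.MapsTo τ (Set.range Sum.inl) (Set.range Sum.inl) := by
    rintro _ ⟨a, rfl⟩
    rcases hs : τ (.inl a) with a' | b
    · exact ⟨a', rfl⟩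
    · have := hρ (finAdd h (.inl a))
      simp only [τ, Equiv.permCongr_apply, Equiv.symm_symm] at hs
      simp [hs] at this
  obtain ⟨p, hp⟩ := Perm.mem_sumCongrHom_range_of_perm_mapsTo_inl hτ
  refine ⟨p, Equiv.ext fun k => ?_⟩
  simpa [blockEmb, τ, Equiv.permCongr_apply] using
    congr_arg (fun σ => finAdd h (σ ((finAdd h).symm k))) hp

end Blocks

instance {j n : ℕ} : MulAction (Perm (Fin n)) (Wset Z j n) where
  smul := WAct Z
  one_smul _ := Subtype.ext <| funext fun _ => rfl
  mul_smul _ _ _ := Subtype.ext <| funext fun _ => rfl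

-- Declared on its own: with only the `MulAction` instance, synthesizing this `•` times out
-- in the `Prod` and `Pi` scalar-action instances.
instance {i j : ℕ} : SMul (Perm (Fin i) × Perm (Fin j)) ((Fin i → ↥(Zᶜ)) × (Fin j → ↥Z)) where
  smul := sourceAct Z

instance {i j : ℕ} : MulAction (Perm (Fin i) × Perm (Fin j)) ((Fin i → ↥(Zᶜ)) × (Fin j → ↥Z)) where
  one_smul _ := rfl
  mul_smul _ _ _ := rfl

section Concat

variable {i j n : ℕ} (h : i + j = n)

@[simp]
lemma concat_finAdd (x : (Fin i → ↥(Zᶜ)) × (Fin j → ↥Z)) (s : Fin i ⊕ Fin j) :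
    concat Z h x (finAdd h s) = Sum.elim (fun a => (x.1 a : X)) (fun b => (x.2 b : X)) s := by
  simp [concat]

lemma concat_injective : Function.Injective (concat Z h) := by
  intro x y hxy
  have := fun s => congr_fun hxy (finAdd h s)
  ext a
  · simpa using this (.inl a)
  · simpa using this (.inr a)

lemma concat_mem_iff (x : (Fin i → ↥(Zᶜ)) × (Fin j → ↥Z)) (k : Fin n) :
    concat Z h x k ∈ Z ↔ ((finAdd h).symm k).isRight := by
  obtain ⟨s | s, rfl⟩ := (finAdd h).surjective k
  · simpa using fun hs => (x.1 s).2 hs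
  · simp

lemma η_smul (p : Perm (Fin i) × Perm (Fin j)) (x : (Fin i → ↥(Zᶜ)) × (Fin j → ↥Z)) :
    η Z h (p • x) = blockEmbHom h p • η Z h x := by
  refine Subtype.ext <| funext fun k => ?_
  change concat Z h (p • x) k = concat Z h x ((blockEmbHom h p)⁻¹ k)
  rw [← map_inv]
  obtain ⟨s | s, rfl⟩ := (finAdd h).surjective k <;>
    simp [blockEmbHom, Equiv.permCongr_apply] <;> rfl

lemma exists_smul_eq_of_η_eq_smul {ρ : Perm (Fin n)} {x y : (Fin i → ↥(Zᶜ)) × (Fin j → ↥Z)}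
    (hxy : η Z h x = ρ • η Z h y) : ∃ p, blockEmbHom h p = ρ ∧ p • y = x := by
  have hk (k : Fin n) : concat Z h x (ρ k) = concat Z h y k := by
    have : concat Z h x (ρ k) = concat Z h y (ρ⁻¹ (ρ k)) :=
      congr_fun (congr_arg Subtype.val hxy) _
    simpa using this
  obtain ⟨p, hp⟩ := exists_blockEmb_eq h (ρ := ρ) fun k => by
    rw [← Bool.coe_iff_coe, ← concat_mem_iff Z h x, ← concat_mem_iff Z h y, hk]
  have hpy : η Z h (p • y) = η Z h x := by rw [η_smul, coe_blockEmbHom, hp, hxy]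
  exact ⟨p, hp, concat_injective Z h (congr_arg Subtype.val hpy)⟩

lemma exists_smul_η_eq (w : Wset Z j n) :
    ∃ (σ : Perm (Fin n)) (x : (Fin i → ↥(Zᶜ)) × (Fin j → ↥Z)), σ • η Z h x = w := by
  classical
  obtain ⟨w, hw⟩ := w
  have hZ : Nat.card {k // w k ∈ Z} = j := hw
  have hZc : Nat.card {k // w k ∉ Z} = i := by
    rw [Nat.card_eq_fintype_card, Fintype.card_subtype_compl, Fintype.card_fin,
      ← Nat.card_eq_fintype_card, hZ]
    omega
  set ei := (Finite.equivFinOfCardEq hZc).symm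
  set ej := (Finite.equivFinOfCardEq hZ).symm
  let e : Fin i ⊕ Fin j ≃ Fin n :=
    (ei.sumCongr ej).trans ((Equiv.sumComm _ _).trans (Equiv.sumCompl fun k => w k ∈ Z))
  refine ⟨(finAdd h).symm.trans e, (fun a => ⟨w (ei a), (ei a).2⟩, fun b => ⟨w (ej b), (ej b).2⟩),
    Subtype.ext <| funext fun k => ?_⟩
  obtain ⟨s | s, rfl⟩ := e.surjective k <;>
    change concat Z h _ (((finAdd h).symm.trans e).symm (e _)) = _ <;> simp [e]

end Concat

/-- Universal property: every `Σi × Σj`-equivariant map out of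
`(Fin i → X \ Z) × (Fin j → Z)` into a `Σn`-set extends uniquely along `η` to a
`Σn`-equivariant map on `W`; consequently `W ≅ Ind_{Σi×Σj}^{Σn}((Fin i → X\Z) × (Fin j → Z))`
as `Σn`-sets. Moreover `W` is invariant under the `Σn`-action (first conjunct). -/
theorem statement0 {i j n : ℕ} (h : i + j = n) :
    (∀ (σ : Perm (Fin n)) (w : Fin n → X), w ∈ Wset Z j n → permSmul σ w ∈ Wset Z j n) ∧
    (∀ (S : Type) (smulS : Perm (Fin n) → S → S),
      (∀ s, smulS 1 s = s) →
      (∀ σ τ s, smulS (σ * τ) s = smulS σ (smulS τ s)) →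
      ∀ f : (Fin i → ↥(Zᶜ)) × (Fin j → ↥Z) → S,
        (∀ p x, f (sourceAct Z p x) = smulS (blockEmb h p) (f x)) →
        ∃! fn : Wset Z j n → S,
          (∀ σ w, fn (WAct Z σ w) = smulS σ (fn w)) ∧
          (∀ x, fn (η Z h x) = f x)) ∧
    (∃ e : Ind (blockEmb h) (sourceAct (i := i) (j := j) Z) ≃ Wset Z j n,
      ∀ (σ : Perm (Fin n)) (z), e (Ind.smul σ z) = WAct Z σ (e z)) := by
  have hsurj := exists_smul_η_eq Z h
  have hfib (ρ : Perm (Fin n)) x y := exists_smul_eq_of_η_eq_smul Z h (ρ := ρ) (x := x) (y := y)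
  refine ⟨fun σ w hw => (WAct Z σ ⟨w, hw⟩).2, fun S smulS h1 hmul f hf => ?_,
    ⟨Equiv.ofBijective _ (Ind.lift_bijective (η_smul Z h) hsurj hfib),
      Ind.lift_smul (φ := blockEmbHom h) (hf := η_smul Z h)⟩⟩
  let _ : MulAction (Perm (Fin n)) S := { smul := smulS, one_smul := h1, mul_smul := hmul }
  exact existsUnique_equivariant_extension (η_smul Z h) hsurj hfib f hf

end Stmt0
end

section
/- Let i' ≤ i ≤ n be natural numbers and set j = n − i. Regard Ω_{≤i'}(Fin i), the poset of nonempty subsets of Fin i of cardinality at most i' ordered by inclusion, as a (Σi × Σj)-poset with the first factor acting elementwise and the second acting trivially, and let Ω_{≤i',i}(Fin n) be the Σn-poset of flags (U, V) of subsets of Fin n with ∅ ≠ U ⊆ V, |U| ≤ i', |V| = i, ordered by componentwise inclusion. Let η : Ω_{≤i'}(Fin i) → Ω_{≤i',i}(Fin n) send U to the flag (ι(U), ι(Fin i)), where ι : Fin i ↪ Fin n is the inclusion of the first i elements. Then for every partial order Q equipped with an order-preserving Σn-action and every (Σi × Σj)-equivariant order-preserving map f : Ω_{≤i'}(Fin i)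 → Q (with Σi × Σj acting on Q through the block embedding into Σn), there exists a unique Σn-equivariant order-preserving map f♮ : Ω_{≤i',i}(Fin n) → Q with f♮ ∘ η = f. -/
/-!
`Σn` acts transitively on the `i`-element subsets of `Fin n`, and the stabilizer of `ι(Fin i)`
is the block subgroup `Σi × Σj`. Hence every flag has the form `σ • η U`, and
`σ • η U = τ • η U'` holds exactly when `τ⁻¹ σ` is a block permutation `p` with
`p • U = U'`.
So an equivariant extension must send `σ • η U` to `σ • f U`, and the equivariance of `f`
makes this well defined. Comparable flags share their second component, so both can be
written with the same `σ`, and monotonicity reduces to that of `f`.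
-/

open Equiv

namespace Stmt4

/-- The standard equivalence `Fin i ⊕ Fin j ≃ Fin n` for `i + j = n`. -/
def finAdd {i j n : ℕ} (h : i + j = n) : Fin i ⊕ Fin j ≃ Fin n :=
  finSumFinEquiv.trans (finCongr h)

/-- The block embedding `Σi × Σj → Σn`. -/
def blockEmb {i j n : ℕ} (h : i + j = n) (p : Perm (Fin i) × Perm (Fin j)) :
    Perm (Fin n) :=
  (finAdd h).permCongr (Equiv.sumCongr p.1 p.2)

/-- The inclusion `Fin i ↪ Fin n` of the first `i` elements, via `Fin i ⊕ Fin j ≃ Fin n`. -/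
def ι {i j n : ℕ} (h : i + j = n) : Fin i → Fin n := fun a => finAdd h (Sum.inl a)

/-- `Ω_{≤m}(α)`: nonempty subsets of `α` of cardinality at most `m`, ordered by
inclusion. -/
def Omega (m : ℕ) (α : Type*) : Type _ :=
  {U : Finset α // U.Nonempty ∧ U.card ≤ m}

/-- The `(Σi × Σj)`-action on `Ω_{≤i'}(Fin i)`: the first factor acts elementwise and
the second factor acts trivially. -/
def omegaAct {i' i j : ℕ} (p : Perm (Fin i) × Perm (Fin j)) (U : Omega i' (Fin i)) :
    Omega i' (Fin i) :=
  ⟨U.val.image p.1, U.2.1.image p.1, Finset.card_image_le.trans U.2.2⟩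

/-- `Ω_{≤i',i}(Fin n)`: flags `(U, V)` of subsets of `Fin n` with `∅ ≠ U ⊆ V`,
`|U| ≤ i'`, `|V| = i`, ordered by componentwise inclusion. -/
def Flag (i' i n : ℕ) : Type _ :=
  {UV : Finset (Fin n) × Finset (Fin n) //
    UV.1.Nonempty ∧ UV.1 ⊆ UV.2 ∧ UV.1.card ≤ i' ∧ UV.2.card = i}

/-- The elementwise `Σn`-action on flags. -/
def flagAct {i' i n : ℕ} (σ : Perm (Fin n)) (F : Flag i' i n) : Flag i' i n :=
  ⟨(F.val.1.image σ, F.val.2.image σ),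
    F.2.1.image σ,
    Finset.image_subset_image F.2.2.1,
    Finset.card_image_le.trans F.2.2.2.1,
    (Finset.card_image_of_injective _ σ.injective).trans F.2.2.2.2⟩

/-- The map `η` sending `U ⊆ Fin i` to the flag `(ι(U), ι(Fin i))` in `Ω_{≤i',i}(Fin n)`. -/
def ηflag {i' i j n : ℕ} (hij : i + j = n) (U : Omega i' (Fin i)) : Flag i' i n :=
  ⟨(U.val.image (ι hij), Finset.univ.image (ι hij)),
    U.2.1.image _,
    Finset.image_subset_image (Finset.subset_univ _),
    Finset.card_image_le.trans U.2.2,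
    by
      have hinj : Function.Injective (ι (i := i) (j := j) hij) := fun a b hab =>
        Sum.inl_injective ((finAdd hij).injective hab)
      rw [Finset.card_image_of_injective _ hinj]
      simp⟩

theorem _root_.Finset.exists_perm_image_eq {α : Type*} [DecidableEq α] {s t : Finset α}
    (h : s.card = t.card) : ∃ σ : Perm α, s.image σ = t := by
  obtain ⟨σ, hσ⟩ := (Set.powersetCard.isPretransitive (α := α) (n := t.card)).exists_smul_eq
    ⟨s, Set.powersetCard.mem_iff.mpr h⟩ ⟨t, Set.powersetCard.mem_iff.mpr rfl⟩
  refine ⟨σ, ?_⟩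
  simpa [Finset.smul_finset_def] using congrArg Subtype.val hσ

section Block

variable {i j n : ℕ} (hij : i + j = n)

lemma ι_injective : Function.Injective (ι hij) :=
  (finAdd hij).injective.comp Sum.inl_injective

lemma blockEmb_apply_ι (p : Perm (Fin i) × Perm (Fin j)) (a : Fin i) :
    blockEmb hij p (ι hij a) = ι hij (p.1 a) := by
  simp [blockEmb, ι, Equiv.permCongr_apply]

lemma exists_blockEmb_eq {σ : Perm (Fin n)}
    (hσ : Set.MapsTo σ (Set.range (ι hij)) (Set.range (ι hij))) :
    ∃ p, blockEmb hij p = σ := by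
  have hmaps :
      Set.MapsTo ((finAdd hij).symm.permCongr σ) (Set.range Sum.inl) (Set.range Sum.inl) := by
    rintro _ ⟨a, rfl⟩
    obtain ⟨b, hb⟩ := hσ ⟨a, rfl⟩
    refine ⟨b, ?_⟩
    change Sum.inl b = (finAdd hij).symm (σ (ι hij a))
    rw [← hb, ι, Equiv.symm_apply_apply]
  obtain ⟨p, hp⟩ := Perm.mem_sumCongrHom_range_of_perm_mapsTo_inl hmaps
  refine ⟨p, ?_⟩
  change (finAdd hij).permCongr (Perm.sumCongrHom _ _ p) = σ
  rw [hp, ← Equiv.permCongr_symm, Equiv.apply_symm_apply]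

end Block

section Flags

variable {i' i j n : ℕ} (hij : i + j = n)

lemma card_image_ι_univ : (Finset.univ.image (ι hij)).card = i := by
  rw [Finset.card_image_of_injective _ (ι_injective hij), Finset.card_univ, Fintype.card_fin]

lemma Flag.ext {F G : Flag i' i n} (h₁ : F.val.1 = G.val.1) (h₂ : F.val.2 = G.val.2) : F = G :=
  Subtype.ext (Prod.ext h₁ h₂)

lemma flagAct_one (F : Flag i' i n) : flagAct 1 F = F :=
  Flag.ext (by simp [flagAct]) (by simp [flagAct])

lemma flagAct_mul (σ τ : Perm (Fin n)) (F : Flag i' i n) :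
    flagAct (σ * τ) F = flagAct σ (flagAct τ F) :=
  Flag.ext (by simp [flagAct, Finset.image_image]) (by simp [flagAct, Finset.image_image])

lemma flagAct_inv_flagAct (σ : Perm (Fin n)) (F : Flag i' i n) :
    flagAct σ (flagAct σ⁻¹ F) = F := by
  rw [← flagAct_mul, mul_inv_cancel, flagAct_one]

lemma exists_ηflag_eq {F : Flag i' i n} (hF : F.val.2 = Finset.univ.image (ι hij)) :
    ∃ U, ηflag hij U = F := by
  classical
  set U := F.val.1.preimage (ι hij) (ι_injective hij).injOn
  have hU : U.image (ι hij) = F.val.1 := by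
    rw [Finset.image_preimage, Finset.filter_true_of_mem]
    intro x hx
    obtain ⟨a, -, rfl⟩ := Finset.mem_image.mp (hF ▸ F.2.2.1 hx)
    exact ⟨a, rfl⟩
  have hcard : U.card = F.val.1.card := by
    rw [← hU, Finset.card_image_of_injective _ (ι_injective hij)]
  refine ⟨⟨U, ?_, hcard.trans_le F.2.2.2.1⟩, Flag.ext hU hF.symm⟩
  exact Finset.Nonempty.of_image (hU ▸ F.2.1)

lemma exists_flagAct_ηflag (F : Flag i' i n) : ∃ σ U, flagAct σ (ηflag hij U) = F := by
  obtain ⟨σ, hσ⟩ :=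
    Finset.exists_perm_image_eq ((card_image_ι_univ hij).trans F.2.2.2.2.symm)
  obtain ⟨U, hU⟩ := exists_ηflag_eq hij (F := flagAct σ⁻¹ F)
    (by simp [flagAct, ← hσ, Finset.image_image, Function.comp_def])
  exact ⟨σ, U, by rw [hU, flagAct_inv_flagAct]⟩

lemma exists_blockEmb_of_flagAct_ηflag_eq {σ : Perm (Fin n)} {U U' : Omega i' (Fin i)}
    (h : flagAct σ (ηflag hij U) = ηflag hij U') :
    ∃ p, blockEmb hij p = σ ∧ omegaAct p U = U' := by
  have h₁ := congrArg (fun F => F.val.1) h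
  have h₂ := congrArg (fun F => F.val.2) h
  simp only [flagAct, ηflag] at h₁ h₂
  obtain ⟨p, rfl⟩ : ∃ p, blockEmb hij p = σ := by
    refine exists_blockEmb_eq hij ?_
    rintro _ ⟨a, rfl⟩
    have : σ (ι hij a) ∈ (Finset.univ.image (ι hij)).image σ :=
      Finset.mem_image_of_mem _ (Finset.mem_image_of_mem _ (Finset.mem_univ a))
    rw [h₂] at this
    simpa using this
  refine ⟨p, rfl, Subtype.ext (Finset.image_injective (ι_injective hij) ?_)⟩
  rw [← h₁, omegaAct, Finset.image_image, Finset.image_image]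
  exact Finset.image_congr fun a _ => (blockEmb_apply_ι hij p a).symm

lemma exists_flagAct_ηflag_of_le {σ : Perm (Fin n)} {U : Omega i' (Fin i)} {G : Flag i' i n}
    (h₁ : (flagAct σ (ηflag hij U)).val.1 ⊆ G.val.1)
    (h₂ : (flagAct σ (ηflag hij U)).val.2 ⊆ G.val.2) :
    ∃ U' : Omega i' (Fin i), U.val ⊆ U'.val ∧ flagAct σ (ηflag hij U') = G := by
  have hV : G.val.2 = (flagAct σ (ηflag hij U)).val.2 :=
    (Finset.eq_of_subset_of_card_le h₂ (by rw [G.2.2.2.2, (flagAct _ _).2.2.2.2])).symm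
  obtain ⟨U', hU'⟩ := exists_ηflag_eq hij (F := flagAct σ⁻¹ G)
    (by simp [flagAct, hV, ηflag, Finset.image_image, Function.comp_def])
  have hG : flagAct σ (ηflag hij U') = G := by rw [hU', flagAct_inv_flagAct]
  refine ⟨U', ?_, hG⟩
  rw [← hG] at h₁
  simp only [flagAct, ηflag] at h₁
  exact (Finset.image_subset_image_iff (ι_injective hij)).mp
    ((Finset.image_subset_image_iff σ.injective).mp h₁)

end Flags

section Extension

variable {i' i j n : ℕ} (hij : i + j = n) {Q : Type*} (smulQ : Perm (Fin n) → Q → Q)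
  (f : Omega i' (Fin i) → Q)

/-- `f♮`: every flag is of the form `σ • η U`, and is sent to `σ • f U`. -/
noncomputable def flagExtension (F : Flag i' i n) : Q :=
  smulQ (exists_flagAct_ηflag hij F).choose (f (exists_flagAct_ηflag hij F).choose_spec.choose)

variable {smulQ f}

lemma smulQ_eq_of_flagAct_ηflag_eq (hQ : ∀ σ τ q, smulQ (σ * τ) q = smulQ σ (smulQ τ q))
    (hf : ∀ p U, f (omegaAct p U) = smulQ (blockEmb hij p) (f U))
    {σ τ : Perm (Fin n)} {U U' : Omega i' (Fin i)}
    (h : flagAct σ (ηflag hij U) = flagAct τ (ηflag hij U')) :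
    smulQ σ (f U) = smulQ τ (f U') := by
  have h' : flagAct (τ⁻¹ * σ) (ηflag hij U) = ηflag hij U' := by
    rw [flagAct_mul, h, ← flagAct_mul, inv_mul_cancel, flagAct_one]
  obtain ⟨p, hp, rfl⟩ := exists_blockEmb_of_flagAct_ηflag_eq hij h'
  rw [hf, hp, ← hQ, mul_inv_cancel_left]

lemma flagExtension_flagAct_ηflag (hQ : ∀ σ τ q, smulQ (σ * τ) q = smulQ σ (smulQ τ q))
    (hf : ∀ p U, f (omegaAct p U) = smulQ (blockEmb hij p) (f U))
    (σ : Perm (Fin n)) (U : Omega i' (Fin i)) :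
    flagExtension hij smulQ f (flagAct σ (ηflag hij U)) = smulQ σ (f U) :=
  smulQ_eq_of_flagAct_ηflag_eq hij hQ hf (exists_flagAct_ηflag hij _).choose_spec.choose_spec

lemma flagExtension_flagAct (hQ : ∀ σ τ q, smulQ (σ * τ) q = smulQ σ (smulQ τ q))
    (hf : ∀ p U, f (omegaAct p U) = smulQ (blockEmb hij p) (f U))
    (τ : Perm (Fin n)) (F : Flag i' i n) :
    flagExtension hij smulQ f (flagAct τ F) = smulQ τ (flagExtension hij smulQ f F) := by
  obtain ⟨σ, U, rfl⟩ := exists_flagAct_ηflag hij F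
  rw [← flagAct_mul]
  simp only [flagExtension_flagAct_ηflag hij hQ hf, hQ]

lemma flagExtension_ηflag (hQ₁ : ∀ q, smulQ 1 q = q)
    (hQ : ∀ σ τ q, smulQ (σ * τ) q = smulQ σ (smulQ τ q))
    (hf : ∀ p U, f (omegaAct p U) = smulQ (blockEmb hij p) (f U)) (U : Omega i' (Fin i)) :
    flagExtension hij smulQ f (ηflag hij U) = f U := by
  rw [← flagAct_one (ηflag hij U), flagExtension_flagAct_ηflag hij hQ hf, hQ₁]

lemma flagExtension_mono [Preorder Q] (hQ : ∀ σ τ q, smulQ (σ * τ) q = smulQ σ (smulQ τ q))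
    (hQmono : ∀ σ, Monotone (smulQ σ))
    (hfmono : ∀ U V : Omega i' (Fin i), U.val ⊆ V.val → f U ≤ f V)
    (hf : ∀ p U, f (omegaAct p U) = smulQ (blockEmb hij p) (f U))
    {F G : Flag i' i n} (h₁ : F.val.1 ⊆ G.val.1) (h₂ : F.val.2 ⊆ G.val.2) :
    flagExtension hij smulQ f F ≤ flagExtension hij smulQ f G := by
  obtain ⟨σ, U, rfl⟩ := exists_flagAct_ηflag hij F
  obtain ⟨U', hUU', rfl⟩ := exists_flagAct_ηflag_of_le hij h₁ h₂
  rw [flagExtension_flagAct_ηflag hij hQ hf, flagExtension_flagAct_ηflag hij hQ hf]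
  exact hQmono σ (hfmono U U' hUU')

end Extension

theorem statement4_general (i' i j n : ℕ) (hij : i + j = n)
    (Q : Type) [PartialOrder Q] (smulQ : Perm (Fin n) → Q → Q)
    (hQ1 : ∀ q, smulQ 1 q = q)
    (hQ2 : ∀ σ τ q, smulQ (σ * τ) q = smulQ σ (smulQ τ q))
    (hQmono : ∀ σ, Monotone (smulQ σ))
    (f : Omega i' (Fin i) → Q)
    (hfmono : ∀ U V : Omega i' (Fin i), U.val ⊆ V.val → f U ≤ f V)
    (hfequi : ∀ (p : Perm (Fin i) × Perm (Fin j)) (U : Omega i' (Fin i)),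
      f (omegaAct p U) = smulQ (blockEmb hij p) (f U)) :
    ∃! fn : Flag i' i n → Q,
      (∀ a b : Flag i' i n, a.val.1 ⊆ b.val.1 → a.val.2 ⊆ b.val.2 → fn a ≤ fn b) ∧
      (∀ (σ : Perm (Fin n)) (a : Flag i' i n), fn (flagAct σ a) = smulQ σ (fn a)) ∧
      (∀ U : Omega i' (Fin i), fn (ηflag hij U) = f U) := by
  refine ⟨flagExtension hij smulQ f,
    ⟨fun _ _ => flagExtension_mono hij hQ2 hQmono hfmono hfequi,
      flagExtension_flagAct hij hQ2 hfequi, flagExtension_ηflag hij hQ1 hQ2 hfequi⟩, ?_⟩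
  rintro fn ⟨-, hequi, hη⟩
  funext F
  obtain ⟨σ, U, rfl⟩ := exists_flagAct_ηflag hij F
  rw [hequi, hη, flagExtension_flagAct_ηflag hij hQ2 hfequi]

/-- Universal property of `Ω_{≤i',i}(Fin n)`: every `(Σi × Σj)`-equivariant
order-preserving map `f` from `Ω_{≤i'}(Fin i)` to a `Σn`-poset `Q` extends uniquely
along `η` to a `Σn`-equivariant order-preserving map `f♮` on `Ω_{≤i',i}(Fin n)`. -/
theorem statement4 (i' i j n : ℕ) (h1 : i' ≤ i) (hij : i + j = n)
    (Q : Type) [PartialOrder Q] (smulQ : Perm (Fin n) → Q → Q)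
    (hQ1 : ∀ q, smulQ 1 q = q)
    (hQ2 : ∀ σ τ q, smulQ (σ * τ) q = smulQ σ (smulQ τ q))
    (hQmono : ∀ σ, Monotone (smulQ σ))
    (f : Omega i' (Fin i) → Q)
    (hfmono : ∀ U V : Omega i' (Fin i), U.val ⊆ V.val → f U ≤ f V)
    (hfequi : ∀ (p : Perm (Fin i) × Perm (Fin j)) (U : Omega i' (Fin i)),
      f (omegaAct p U) = smulQ (blockEmb hij p) (f U)) :
    ∃! fn : Flag i' i n → Q,
      (∀ a b : Flag i' i n, a.val.1 ⊆ b.val.1 → a.val.2 ⊆ b.val.2 → fn a ≤ fn b) ∧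
      (∀ (σ : Perm (Fin n)) (a : Flag i' i n), fn (flagAct σ a) = smulQ σ (fn a)) ∧
      (∀ U : Omega i' (Fin i), fn (ηflag hij U) = f U) :=
  statement4_general i' i j n hij Q smulQ hQ1 hQ2 hQmono f hfmono hfequi

end Stmt4
end

section
/- Let 1 ≤ i ≤ n and j be natural numbers, and let Σn = Equiv.Perm (Fin n). Let Ω_{≤i,i}(Fin n) be the Σn-poset of flags (U, V) of subsets of Fin n with ∅ ≠ U ⊆ V, |U| ≤ i, |V| = i, ordered by componentwise inclusion, and let Ω_{≤i}(Fin n) be the Σn-poset of nonempty subsets of Fin n of cardinality at most i, ordered by inclusion. Then the map sending a j-chain (U_0, V_0) < (U_1, V_1) < ⋯ < (U_j, V_j) to the j-chain U_0 < U_1 < ⋯ < U_j is a Σn-equivariant bijection from the set of j-chains in Ω_{≤i,i}(Fin n) whose maximal element (U_j, V_j) satisfies U_j = V_j onto the set of j-chains in Ω_{≤i}(Fin n) whose maximal element U_j has cardinality exactly i. -/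
open Equiv

namespace Stmt6

/-- `Ω_{≤m}(α)`: nonempty subsets of `α` of cardinality at most `m`, ordered by
inclusion. -/
def Omega (m : ℕ) (α : Type*) : Type _ :=
  {U : Finset α // U.Nonempty ∧ U.card ≤ m}

/-- The ordering on `Ω_{≤m}(Fin n)`: inclusion. -/
def omLe {m : ℕ} {α : Type*} (U V : Omega m α) : Prop := U.val ⊆ V.val

/-- The strict ordering on `Ω_{≤m}(Fin n)`. -/
def omLt {m : ℕ} {α : Type*} (U V : Omega m α) : Prop := omLe U V ∧ U ≠ V

/-- The elementwise `Σn`-action on `Ω_{≤m}(Fin n)`. -/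
def omegaAct {m n : ℕ} (σ : Perm (Fin n)) (U : Omega m (Fin n)) : Omega m (Fin n) :=
  ⟨U.val.image σ, U.2.1.image σ, Finset.card_image_le.trans U.2.2⟩

/-- `Ω_{≤i',i}(Fin n)`: flags `(U, V)` of subsets of `Fin n` with `∅ ≠ U ⊆ V`,
`|U| ≤ i'`, `|V| = i`, ordered by componentwise inclusion. -/
def Flag (i' i n : ℕ) : Type _ :=
  {UV : Finset (Fin n) × Finset (Fin n) //
    UV.1.Nonempty ∧ UV.1 ⊆ UV.2 ∧ UV.1.card ≤ i' ∧ UV.2.card = i}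

/-- The ordering on flags: componentwise inclusion. -/
def flagLe {i' i n : ℕ} (a b : Flag i' i n) : Prop :=
  a.val.1 ⊆ b.val.1 ∧ a.val.2 ⊆ b.val.2

/-- The strict ordering on flags. -/
def flagLt {i' i n : ℕ} (a b : Flag i' i n) : Prop := flagLe a b ∧ a ≠ b

/-- The elementwise `Σn`-action on flags. -/
def flagAct {i' i n : ℕ} (σ : Perm (Fin n)) (F : Flag i' i n) : Flag i' i n :=
  ⟨(F.val.1.image σ, F.val.2.image σ),
    F.2.1.image σ,
    Finset.image_subset_image F.2.2.1,
    Finset.card_image_le.trans F.2.2.2.1,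
    (Finset.card_image_of_injective _ σ.injective).trans F.2.2.2.2⟩

lemma flagAct_injective {i' i n : ℕ} (σ : Perm (Fin n)) :
    Function.Injective (flagAct (i' := i') (i := i) σ) := by
  intro a b hab
  have h1 := congrArg (fun F : Flag i' i n => F.val.1) hab
  have h2 := congrArg (fun F : Flag i' i n => F.val.2) hab
  exact Subtype.ext (Prod.ext_iff.mpr
    ⟨Finset.image_injective σ.injective h1, Finset.image_injective σ.injective h2⟩)

lemma omegaAct_injective {m n : ℕ} (σ : Perm (Fin n)) :
    Function.Injective (omegaAct (m := m) σ) := by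
  intro a b hab
  exact Subtype.ext (Finset.image_injective σ.injective (congrArg Subtype.val hab))

/-- `j`-chains in `Ω_{≤i,i}(Fin n)` whose maximal element `(U_j, V_j)` satisfies
`U_j = V_j`. -/
def DChains (i j n : ℕ) : Type _ :=
  {c : Fin (j + 1) → Flag i i n //
    (∀ k l, k < l → flagLt (c k) (c l)) ∧
    (c (Fin.last j)).val.1 = (c (Fin.last j)).val.2}

/-- `j`-chains in `Ω_{≤i}(Fin n)` whose maximal element has cardinality exactly `i`. -/
def CChains (i j n : ℕ) : Type _ :=
  {c : Fin (j + 1) → Omega i (Fin n) //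
    (∀ k l, k < l → omLt (c k) (c l)) ∧
    (c (Fin.last j)).val.card = i}

/-- The entrywise `Σn`-action on `DChains`. -/
def dAct {i j n : ℕ} (σ : Perm (Fin n)) (c : DChains i j n) : DChains i j n :=
  ⟨fun k => flagAct σ (c.val k), by
    constructor
    · intro k l hkl
      obtain ⟨⟨hle1, hle2⟩, hne⟩ := c.2.1 k l hkl
      exact ⟨⟨Finset.image_subset_image hle1, Finset.image_subset_image hle2⟩,
        fun hc => hne (flagAct_injective σ hc)⟩
    · exact congrArg (Finset.image σ) c.2.2⟩

/-- The entrywise `Σn`-action on `CChains`. -/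
def cAct {i j n : ℕ} (σ : Perm (Fin n)) (c : CChains i j n) : CChains i j n :=
  ⟨fun k => omegaAct σ (c.val k), by
    constructor
    · intro k l hkl
      obtain ⟨hle, hne⟩ := c.2.1 k l hkl
      exact ⟨Finset.image_subset_image hle, fun hc => hne (omegaAct_injective σ hc)⟩
    · exact (Finset.card_image_of_injective _ σ.injective).trans c.2.2⟩

lemma Flag.ext {i' i n : ℕ} {a b : Flag i' i n} (h₁ : a.val.1 = b.val.1) (h₂ : a.val.2 = b.val.2) :
    a = b :=
  Subtype.ext (Prod.ext h₁ h₂)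

/-- All second components have cardinality `i` and are contained in the last one, so they are
all equal to it. -/
lemma DChains.snd_eq_snd_last {i j n : ℕ} (c : DChains i j n) (k : Fin (j + 1)) :
    (c.val k).val.2 = (c.val (Fin.last j)).val.2 := by
  rcases (Fin.le_last k).eq_or_lt with rfl | hk
  · rfl
  · exact Finset.eq_of_subset_of_card_le (c.2.1 k _ hk).1.2
      (by rw [(c.val k).2.2.2.2, (c.val (Fin.last j)).2.2.2.2])

lemma CChains.val_subset_val_last {i j n : ℕ} (c : CChains i j n) (k : Fin (j + 1)) :
    (c.val k).val ⊆ (c.val (Fin.last j)).val := by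
  rcases (Fin.le_last k).eq_or_lt with rfl | hk
  · exact subset_rfl
  · exact (c.2.1 k _ hk).1

def DChains.toCChains {i j n : ℕ} (c : DChains i j n) : CChains i j n :=
  ⟨fun k => ⟨(c.val k).val.1, (c.val k).2.1, (c.val k).2.2.2.1⟩,
    fun k l hkl => ⟨(c.2.1 k l hkl).1.1, fun h => (c.2.1 k l hkl).2 <|
      Flag.ext (congrArg Subtype.val h) ((c.snd_eq_snd_last k).trans (c.snd_eq_snd_last l).symm)⟩,
    (congrArg Finset.card c.2.2).trans (c.val (Fin.last j)).2.2.2.2⟩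

def CChains.toDChains {i j n : ℕ} (c : CChains i j n) : DChains i j n :=
  ⟨fun k => ⟨((c.val k).val, (c.val (Fin.last j)).val),
      (c.val k).2.1, c.val_subset_val_last k, (c.val k).2.2, c.2.2⟩,
    fun k l hkl => ⟨⟨(c.2.1 k l hkl).1, subset_rfl⟩,
      fun h => (c.2.1 k l hkl).2 (Subtype.ext (congrArg (fun F : Flag i i n => F.val.1) h))⟩,
    rfl⟩

def chainsEquiv (i j n : ℕ) : DChains i j n ≃ CChains i j n where
  toFun := DChains.toCChains
  invFun := CChains.toDChains
  left_inv c := Subtype.ext <| funext fun k =>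
    Flag.ext rfl (c.2.2.trans (c.snd_eq_snd_last k).symm)
  right_inv _ := rfl

lemma DChains.toCChains_dAct {i j n : ℕ} (σ : Perm (Fin n)) (c : DChains i j n) :
    (dAct σ c).toCChains = cAct σ c.toCChains :=
  rfl

theorem statement6_general (i j n : ℕ) :
    ∃ e : DChains i j n ≃ CChains i j n,
      (∀ (σ : Perm (Fin n)) (c : DChains i j n), e (dAct σ c) = cAct σ (e c)) ∧
      (∀ (c : DChains i j n) (k : Fin (j + 1)), ((e c).val k).val = (c.val k).val.1) :=
  ⟨chainsEquiv i j n, DChains.toCChains_dAct, fun _ _ => rfl⟩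

/-- Forgetting the (constant) second components of a `j`-chain of flags whose maximal
element satisfies `U_j = V_j` gives a `Σn`-equivariant bijection onto the `j`-chains in
`Ω_{≤i}(Fin n)` whose maximal element has cardinality exactly `i`. -/
theorem statement6 (i j n : ℕ) (h0 : 1 ≤ i) (h2 : i ≤ n) :
    ∃ e : DChains i j n ≃ CChains i j n,
      (∀ (σ : Perm (Fin n)) (c : DChains i j n), e (dAct σ c) = cAct σ (e c)) ∧
      (∀ (c : DChains i j n) (k : Fin (j + 1)), ((e c).val k).val = (c.val k).val.1) :=
  statement6_general i j n

end Stmt6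
end
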